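/- arXiv:1410.2652 — 2 statements merged into one kernel-verified Lean document; each statement's English description precedes it below -/
import Mathlib

section
/- Let p be a candidate in a weakCondorcet election (C, V). If for every candidate c ∈ C \ {p} that is a weakCondorcet winner of (C \ {p}, V), p strictly defeats c head-to-head (strictly more than half the voters prefer p to c), then p is the unique winner of the two-stage runoff election with candidate partition ({p}, C \ {p}) under ties-promote: p trivially wins the first subelection, every weakCondorcet winner of (C \ {p}, V) competes against p in the runoff, and p is the unique weakCondorcet winner of the runoff. -/
/-- `c` is a weakCondorcet winner of the election with candidate set `C` and
voter list `V` (each voter `v` prefers `x` to `y` iff `v x y = true`). -/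
def weakCondorcetWinner {α : Type} (C : Finset α) (V : List (α → α → Bool))
    (c : α) : Prop :=
  c ∈ C ∧ ∀ d ∈ C, d ≠ c →
    V.countP (fun v => v d c) ≤ V.countP (fun v => v c d)

/-- weakCondorcet-RPC-TP with candidate partition ({p}, C \ {p}):
`p` trivially wins the first subelection, all weakCondorcet winners of
`(C \ {p}, V)` advance to the runoff together with `p`, and `p` is the
unique weakCondorcet winner of the runoff. -/
theorem stmt_6 {α : Type} [DecidableEq α] (C : Finset α)
    (V : List (α → α → Bool)) (p : α) (hp : p ∈ C)
    (hbeats : ∀ c ∈ C.erase p, weakCondorcetWinner (C.erase p) V c →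
      V.countP (fun v => v c p) < V.countP (fun v => v p c))
    (A : Finset α)
    (hA : ∀ c, c ∈ A ↔ c = p ∨ weakCondorcetWinner (C.erase p) V c) :
    weakCondorcetWinner {p} V p ∧
    weakCondorcetWinner A V p ∧
    (∀ c ∈ A, weakCondorcetWinner A V c → c = p) := by
  have hpA : p ∈ A := (hA p).mpr (Or.inl rfl)
  refine ⟨⟨Finset.mem_singleton_self p, ?_⟩, ⟨hpA, ?_⟩, ?_⟩
  · intro d hd hdp
    exact absurd (Finset.mem_singleton.mp hd) hdp
  · intro d hd hdp
    rcases (hA d).mp hd with rfl | hw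
    · exact absurd rfl hdp
    · exact le_of_lt (hbeats d hw.1 hw)
  · intro c hc hw
    by_contra hcp
    rcases (hA c).mp hc with rfl | hw'
    · exact hcp rfl
    · have h1 := hbeats c hw'.1 hw'
      have h2 := hw.2 p hpA (Ne.symm hcp)
      exact absurd h2 (not_le.mpr h1)
end

section
/- In the X3C reduction election, if B' ⊆ S is an exact cover of B (|B'| = m and the sets in B' are pairwise disjoint with union B), then in the subelection restricted to voters V₁ = V \ (groups corresponding to B' ∪ G_c ∪ G_d): p has plurality score 2n, each b_j ∈ B has score 2n − 1, c has score 1, d has score 0, and e has score 2n − 1; hence p is the unique plurality winner of (C, V₁). -/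
/-- The `i`-th voter group `G_i` of the X3C reduction. -/
def groupG {α : Type} {M : ℕ} (p e : α) (b : Fin M → α)
    (Si : Finset (Fin M)) : Multiset α :=
  Multiset.replicate 2 p + Si.val.map b + {e}

/-- `ℓ j` = number of sets `S i` containing `b j`. -/
def ellOf {M n : ℕ} (S : Fin n → Finset (Fin M)) (j : Fin M) : ℕ :=
  (Finset.univ.filter (fun i => j ∈ S i)).card

/-- The group `G_B` of the X3C reduction. -/
def groupB {α : Type} (M n m : ℕ) (p c e : α) (b : Fin M → α)
    (S : Fin n → Finset (Fin M)) : Multiset α :=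
  (Finset.univ.sum fun j : Fin M =>
      Multiset.replicate (2 * n - ellOf S j) (b j)) +
    Multiset.replicate (2 * m) p + Multiset.replicate (n + m - 1) e + {c}

theorem stmt_14 {α : Type} [DecidableEq α] (m n : ℕ) (hm : 1 < m)
    (hn : m + 1 < n) (p c d e : α) (b : Fin (3 * m) → α)
    (hb : Function.Injective b)
    (hdis : ∀ j, b j ≠ p ∧ b j ≠ c ∧ b j ≠ d ∧ b j ≠ e)
    (hpcde : p ≠ c ∧ p ≠ d ∧ p ≠ e ∧ c ≠ d ∧ c ≠ e ∧ d ≠ e)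
    (S : Fin n → Finset (Fin (3 * m))) (hS : ∀ i, (S i).card = 3)
    -- `T` indexes an exact cover of `B` by the sets `S i`, `i ∈ T`:
    (T : Finset (Fin n)) (hT : T.card = m)
    (hcover : T.biUnion S = Finset.univ)
    (hdisjcover : ∀ i ∈ T, ∀ i' ∈ T, i ≠ i' → Disjoint (S i) (S i'))
    -- `V₁` consists of `G_B` together with the groups not in the cover:
    (V₁ : Multiset α)
    (hV₁ : V₁ = groupB (3 * m) n m p c e b S +
      ((Finset.univ \ T).sum fun i => groupG p e b (S i))) :
    V₁.count p = 2 * n ∧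
    (∀ j, V₁.count (b j) = 2 * n - 1) ∧
    V₁.count c = 1 ∧ V₁.count d = 0 ∧ V₁.count e = 2 * n - 1 ∧
    (∀ x : α, (x = c ∨ x = d ∨ x = e ∨ ∃ j, x = b j) → x ≠ p →
      V₁.count x < V₁.count p) := by
  obtain ⟨hpc, hpd, hpe, hcd, hce, hde⟩ := hpcde
  subst hV₁
  have hcard : (Finset.univ \ T).card = n - m := by
    rw [Finset.card_sdiff_of_subset (Finset.subset_univ T), Finset.card_univ, Fintype.card_fin, hT]
  -- ℓ bounds
  have hell_le : ∀ j, ellOf S j ≤ n := fun j =>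
    (Finset.card_filter_le _ _).trans (by simp)
  -- in T, exactly one i contains j
  have hone : ∀ j, (T.filter (fun i => j ∈ S i)).card = 1 := by
    intro j
    rw [Finset.card_eq_one]
    have hj : j ∈ T.biUnion S := hcover ▸ Finset.mem_univ j
    obtain ⟨i, hiT, hiS⟩ := Finset.mem_biUnion.mp hj
    refine ⟨i, Finset.eq_singleton_iff_unique_mem.mpr ⟨Finset.mem_filter.mpr ⟨hiT, hiS⟩, ?_⟩⟩
    intro i' hi'
    obtain ⟨hi'T, hi'S⟩ := Finset.mem_filter.mp hi'
    by_contra hne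
    exact (Finset.disjoint_left.mp (hdisjcover i' hi'T i hiT hne) hi'S) hiS
  have hell_pos : ∀ j, 1 ≤ ellOf S j := by
    intro j
    rw [← hone j]
    exact Finset.card_le_card (Finset.filter_subset_filter _ (Finset.subset_univ T))
  -- counts in groupB
  have hBsum : ∀ x : α, (Multiset.count x ((Finset.univ.sum fun j : Fin (3*m) =>
      Multiset.replicate (2 * n - ellOf S j) (b j)))) =
      ∑ j : Fin (3*m), if b j = x then 2 * n - ellOf S j else 0 := by
    intro x
    rw [Multiset.count_sum']
    exact Finset.sum_congr rfl fun j _ => Multiset.count_replicate _ _ _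
  have hBp : (groupB (3*m) n m p c e b S).count p = 2 * m := by
    simp [groupB, Multiset.count_replicate, hBsum, hpe, hpe.symm, hpc, hpc.symm,
      fun j => (hdis j).1, Multiset.count_singleton]
  have hBb : ∀ j, (groupB (3*m) n m p c e b S).count (b j) = 2 * n - ellOf S j := by
    intro j
    simp only [groupB, Multiset.count_add, hBsum, Multiset.count_replicate,
      Multiset.count_singleton, if_neg (hdis j).1.symm, if_neg (hdis j).2.1,
      if_neg (hdis j).2.2.2.symm, add_zero]
    rw [Finset.sum_eq_single j (fun j' _ hne => if_neg (fun h => hne (hb h))) (by simp)]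
    simp
  have hBc : (groupB (3*m) n m p c e b S).count c = 1 := by
    simp [groupB, Multiset.count_replicate, hBsum, hpc, hpc.symm, hce, hce.symm,
      fun j => (hdis j).2.1, Multiset.count_singleton]
  have hBd : (groupB (3*m) n m p c e b S).count d = 0 := by
    simp [groupB, Multiset.count_replicate, hBsum, hpd, hpd.symm, hde, hde.symm, hcd, hcd.symm,
      fun j => (hdis j).2.2.1, Multiset.count_singleton]
  have hBe : (groupB (3*m) n m p c e b S).count e = n + m - 1 := by
    simp [groupB, Multiset.count_replicate, hBsum, hpe, hpe.symm, hce, hce.symm,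
      fun j => (hdis j).2.2.2, Multiset.count_singleton]
  -- counts in groupG
  have hmapb : ∀ (x : α) (i), (∀ j, x ≠ b j) → Multiset.count x ((S i).val.map b) = 0 := by
    intro x i hx
    rw [Multiset.count_eq_zero]
    intro hmem
    obtain ⟨j, _, hj⟩ := Multiset.mem_map.mp hmem
    exact hx j hj.symm
  have hGp : ∀ i, (groupG p e b (S i)).count p = 2 := by
    intro i
    simp [groupG, Multiset.count_replicate, Multiset.count_singleton, hpe, hpe.symm,
      hmapb p i fun j => (hdis j).1.symm]
  have hGb : ∀ j i, (groupG p e b (S i)).count (b j) = if j ∈ S i then 1 else 0 := by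
    intro j i
    simp only [groupG, Multiset.count_add, Multiset.count_replicate,
      Multiset.count_singleton, if_neg (hdis j).1.symm, if_neg (hdis j).2.2.2,
      zero_add, add_zero]
    rw [Multiset.count_map_eq_count' b _ hb]
    by_cases h : j ∈ S i
    · rw [if_pos h, Multiset.count_eq_one_of_mem (S i).nodup h]
    · rw [if_neg h, Multiset.count_eq_zero_of_notMem h]
  have hGc : ∀ i, (groupG p e b (S i)).count c = 0 := by
    intro i
    simp [groupG, Multiset.count_replicate, Multiset.count_singleton, hpc, hpc.symm, hce, hce.symm,
      hmapb c i fun j => (hdis j).2.1.symm]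
  have hGd : ∀ i, (groupG p e b (S i)).count d = 0 := by
    intro i
    simp [groupG, Multiset.count_replicate, Multiset.count_singleton, hpd, hpd.symm, hde, hde.symm,
      hmapb d i fun j => (hdis j).2.2.1.symm]
  have hGe : ∀ i, (groupG p e b (S i)).count e = 1 := by
    intro i
    simp [groupG, Multiset.count_replicate, Multiset.count_singleton, hpe, hpe.symm,
      hmapb e i fun j => (hdis j).2.2.2.symm]
  have hcount : ∀ x : α, (groupB (3*m) n m p c e b S +
      ((Finset.univ \ T).sum fun i => groupG p e b (S i))).count x =
      (groupB (3*m) n m p c e b S).count x +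
      ∑ i ∈ Finset.univ \ T, (groupG p e b (S i)).count x := by
    intro x
    rw [Multiset.count_add, Multiset.count_sum']
  have hp : (groupB (3*m) n m p c e b S +
      ((Finset.univ \ T).sum fun i => groupG p e b (S i))).count p = 2 * n := by
    rw [hcount, hBp]
    rw [Finset.sum_congr rfl fun i _ => hGp i, Finset.sum_const, hcard, smul_eq_mul]
    omega
  have he : (groupB (3*m) n m p c e b S +
      ((Finset.univ \ T).sum fun i => groupG p e b (S i))).count e = 2 * n - 1 := by
    rw [hcount, hBe]
    rw [Finset.sum_congr rfl fun i _ => hGe i, Finset.sum_const, hcard, smul_eq_mul]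
    omega
  have hc : (groupB (3*m) n m p c e b S +
      ((Finset.univ \ T).sum fun i => groupG p e b (S i))).count c = 1 := by
    rw [hcount, hBc, Finset.sum_congr rfl fun i _ => hGc i, Finset.sum_const]
    simp
  have hd : (groupB (3*m) n m p c e b S +
      ((Finset.univ \ T).sum fun i => groupG p e b (S i))).count d = 0 := by
    rw [hcount, hBd, Finset.sum_congr rfl fun i _ => hGd i, Finset.sum_const]
    simp
  have hbj : ∀ j, (groupB (3*m) n m p c e b S +
      ((Finset.univ \ T).sum fun i => groupG p e b (S i))).count (b j) = 2 * n - 1 := by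
    intro j
    rw [hcount, hBb j, Finset.sum_congr rfl fun i _ => hGb j i]
    have hsum_univ : ∑ i : Fin n, (if j ∈ S i then 1 else 0) = ellOf S j :=
      (Finset.card_filter _ _).symm
    have hsum_T : ∑ i ∈ T, (if j ∈ S i then 1 else 0) = 1 := by
      rw [← Finset.card_filter]; exact hone j
    have hsd : (∑ i ∈ Finset.univ \ T, if j ∈ S i then 1 else 0) +
        ∑ i ∈ T, (if j ∈ S i then 1 else 0) = ∑ i : Fin n, (if j ∈ S i then 1 else 0) :=
      Finset.sum_sdiff (Finset.subset_univ T)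
    have hsplit : ∑ i ∈ Finset.univ \ T, (if j ∈ S i then 1 else 0) = ellOf S j - 1 := by
      omega
    rw [hsplit]
    have := hell_le j; have := hell_pos j
    omega
  refine ⟨hp, hbj, hc, hd, he, ?_⟩
  rintro x (rfl | rfl | rfl | ⟨j, rfl⟩) hxp <;>
    simp only [hp, hc, hd, he, hbj] <;> omega
end
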